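/- If e is a well-formed suspension environment and e rewrites to e' by a single application of any reading or merging rule (applied at the top level or to a subexpression), then e' is well-formed, len(e') = len(e), and lev(e') ≤ lev(e). -/
import Mathlib


mutual
inductive STerm : Type
  | const : ℕ → STerm
  | var   : ℕ → STerm
  | app   : STerm → STerm → STerm
  | lam   : STerm → STerm
  | susp  : STerm → ℕ → ℕ → SEnv → STerm
inductive SEnv : Type
  | nil   : SEnv
  | cons  : STerm → ℕ → SEnv → SEnv
  | merge : SEnv → ℕ → ℕ → SEnv → SEnv
end

/-- Length of an environment. -/
def SEnv.len : SEnv → ℕ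
  | .nil => 0
  | .cons _ _ e => 1 + e.len
  | .merge e1 nl1 ol2 _ => e1.len + (ol2 - nl1)

/-- Level of an environment. -/
def SEnv.lev : SEnv → ℕ
  | .nil => 0
  | .cons _ n _ => n
  | .merge _ nl1 ol2 e2 => e2.lev + (nl1 - ol2)

mutual
/-- Well-formedness of suspension terms. -/
def STerm.wf : STerm → Prop
  | .const _ => True
  | .var _ => True
  | .app t1 t2 => t1.wf ∧ t2.wf
  | .lam t => t.wf
  | .susp t ol nl e => t.wf ∧ e.wf ∧ e.len = ol ∧ e.lev ≤ nl
/-- Well-formedness of suspension environments. -/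
def SEnv.wf : SEnv → Prop
  | .nil => True
  | .cons t n e => t.wf ∧ e.wf ∧ e.lev ≤ n
  | .merge e1 nl1 ol2 e2 => e1.wf ∧ e2.wf ∧ e2.len = ol2 ∧ e1.lev ≤ nl1
end

/-- A simple environment: no merged environments on the top spine. -/
def SEnv.simple : SEnv → Prop
  | .nil => True
  | .cons _ _ e => e.simple
  | .merge _ _ _ _ => False

mutual
/-- One step of the reading rules (r1)-(r6) and merging rules (m1)-(m6),
applied anywhere (compatible closure). -/
inductive StepT : STerm → STerm → Prop
  | r1 : ∀ (c ol nl : ℕ) (e : SEnv), StepT (.susp (.const c) ol nl e) (.const c)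
  | r2 : ∀ (i nl : ℕ), StepT (.susp (.var i) 0 nl .nil) (.var (i + nl))
  | r3 : ∀ (ol nl : ℕ) (t : STerm) (l : ℕ) (e : SEnv),
      StepT (.susp (.var 1) ol nl (.cons t l e)) (.susp t 0 (nl - l) .nil)
  | r4 : ∀ (i ol nl : ℕ) (t : STerm) (l : ℕ) (e : SEnv), 1 < i →
      StepT (.susp (.var i) ol nl (.cons t l e)) (.susp (.var (i - 1)) (ol - 1) nl e)
  | r5 : ∀ (t1 t2 : STerm) (ol nl : ℕ) (e : SEnv),
      StepT (.susp (.app t1 t2) ol nl e) (.app (.susp t1 ol nl e) (.susp t2 ol nl e))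
  | r6 : ∀ (t : STerm) (ol nl : ℕ) (e : SEnv),
      StepT (.susp (.lam t) ol nl e)
            (.lam (.susp t (ol + 1) (nl + 1) (.cons (.var 1) (nl + 1) e)))
  | m1 : ∀ (t : STerm) (ol1 nl1 : ℕ) (e1 : SEnv) (ol2 nl2 : ℕ) (e2 : SEnv),
      StepT (.susp (.susp t ol1 nl1 e1) ol2 nl2 e2)
            (.susp t (ol1 + (ol2 - nl1)) (nl2 + (nl1 - ol2)) (.merge e1 nl1 ol2 e2))
  | appL : ∀ (t1 t1' t2 : STerm), StepT t1 t1' → StepT (.app t1 t2) (.app t1' t2)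
  | appR : ∀ (t1 t2 t2' : STerm), StepT t2 t2' → StepT (.app t1 t2) (.app t1 t2')
  | lamC : ∀ (t t' : STerm), StepT t t' → StepT (.lam t) (.lam t')
  | suspT : ∀ (t t' : STerm) (ol nl : ℕ) (e : SEnv),
      StepT t t' → StepT (.susp t ol nl e) (.susp t' ol nl e)
  | suspE : ∀ (t : STerm) (ol nl : ℕ) (e e' : SEnv),
      StepE e e' → StepT (.susp t ol nl e) (.susp t ol nl e')
inductive StepE : SEnv → SEnv → Prop
  | m2 : ∀ (e1 : SEnv) (nl1 : ℕ), StepE (.merge e1 nl1 0 .nil) e1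
  | m3 : ∀ (ol2 : ℕ) (e2 : SEnv), StepE (.merge .nil 0 ol2 e2) e2
  | m4 : ∀ (nl1 ol2 : ℕ) (t : STerm) (l : ℕ) (e2 : SEnv), 1 ≤ nl1 →
      StepE (.merge .nil nl1 ol2 (.cons t l e2)) (.merge .nil (nl1 - 1) (ol2 - 1) e2)
  | m5 : ∀ (t : STerm) (n : ℕ) (e1 : SEnv) (nl1 ol2 : ℕ) (s : STerm) (l : ℕ) (e2 : SEnv),
      n < nl1 →
      StepE (.merge (.cons t n e1) nl1 ol2 (.cons s l e2))
            (.merge (.cons t n e1) (nl1 - 1) (ol2 - 1) e2)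
  | m6 : ∀ (t : STerm) (n : ℕ) (e1 : SEnv) (ol2 : ℕ) (s : STerm) (l : ℕ) (e2 : SEnv),
      StepE (.merge (.cons t n e1) n ol2 (.cons s l e2))
            (.cons (.susp t ol2 l (.cons s l e2)) (l + (n - ol2))
                   (.merge e1 n ol2 (.cons s l e2)))
  | consT : ∀ (t t' : STerm) (n : ℕ) (e : SEnv),
      StepT t t' → StepE (.cons t n e) (.cons t' n e)
  | consE : ∀ (t : STerm) (n : ℕ) (e e' : SEnv),
      StepE e e' → StepE (.cons t n e) (.cons t n e')
  | mergeL : ∀ (e1 e1' : SEnv) (nl1 ol2 : ℕ) (e2 : SEnv),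
      StepE e1 e1' → StepE (.merge e1 nl1 ol2 e2) (.merge e1' nl1 ol2 e2)
  | mergeR : ∀ (e1 : SEnv) (nl1 ol2 : ℕ) (e2 e2' : SEnv),
      StepE e2 e2' → StepE (.merge e1 nl1 ol2 e2) (.merge e1 nl1 ol2 e2')
end


mutual
theorem stepT_wf : ∀ {t t' : STerm}, StepT t t' → t.wf → t'.wf
  | _, _, .r1 c ol nl e, _ => trivial
  | _, _, .r2 i nl, _ => trivial
  | _, _, .r3 ol nl t l e, hw => by
      obtain ⟨ht, ⟨htw, hew, hle⟩, hlen, hlev⟩ := hw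
      exact ⟨htw, trivial, rfl, Nat.zero_le _⟩
  | _, _, .r4 i ol nl t l e hi, hw => by
      obtain ⟨ht, ⟨htw, hew, hle⟩, hlen, hlev⟩ := hw
      simp only [SEnv.len] at hlen
      exact ⟨trivial, hew, by omega, le_trans hle hlev⟩
  | _, _, .r5 t1 t2 ol nl e, hw => by
      obtain ⟨⟨h1, h2⟩, hew, hlen, hlev⟩ := hw
      exact ⟨⟨h1, hew, hlen, hlev⟩, ⟨h2, hew, hlen, hlev⟩⟩
  | _, _, .r6 t ol nl e, hw => by
      obtain ⟨ht, hew, hlen, hlev⟩ := hw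
      refine ⟨ht, ⟨trivial, hew, by simpa using Nat.le_succ_of_le hlev⟩, ?_, ?_⟩
      · simp [SEnv.len]; omega
      · simp [SEnv.lev]
  | _, _, .m1 t ol1 nl1 e1 ol2 nl2 e2, hw => by
      obtain ⟨⟨ht, he1, hl1, hv1⟩, he2, hl2, hv2⟩ := hw
      refine ⟨ht, ⟨he1, he2, hl2, hv1⟩, ?_, ?_⟩
      · simp [SEnv.len]; omega
      · simp [SEnv.lev]; omega
  | _, _, .appL t1 t1' t2 h, hw => ⟨stepT_wf h hw.1, hw.2⟩
  | _, _, .appR t1 t2 t2' h, hw => ⟨hw.1, stepT_wf h hw.2⟩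
  | _, _, .lamC t t' h, hw => by
      have := stepT_wf h hw; simpa [STerm.wf] using this
  | _, _, .suspT t t' ol nl e h, hw => ⟨stepT_wf h hw.1, hw.2⟩
  | _, _, .suspE t ol nl e e' h, hw => by
      obtain ⟨ht, hew, hlen, hlev⟩ := hw
      obtain ⟨hw', hlen', hlev'⟩ := stepE_main h hew
      exact ⟨ht, hw', hlen'.trans hlen, le_trans hlev' hlev⟩

theorem stepE_main : ∀ {e e' : SEnv}, StepE e e' → e.wf →
    e'.wf ∧ e'.len = e.len ∧ e'.lev ≤ e.lev
  | _, _, .m2 e1 nl1, hw => by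
      obtain ⟨h1, -, -, hv⟩ := hw
      refine ⟨h1, by simp [SEnv.len], by simpa [SEnv.lev] using hv⟩
  | _, _, .m3 ol2 e2, hw => by
      obtain ⟨-, h2, hl2, -⟩ := hw
      exact ⟨h2, by simp [SEnv.len]; omega, by simp [SEnv.lev]⟩
  | _, _, .m4 nl1 ol2 t l e2 h1, hw => by
      obtain ⟨-, ⟨ht, he2, hle⟩, hl2, -⟩ := hw
      simp only [SEnv.len] at hl2
      refine ⟨⟨trivial, he2, by omega, Nat.zero_le _⟩, ?_, ?_⟩
      · simp [SEnv.len]; omega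
      · simp [SEnv.lev]; omega
  | _, _, .m5 t n e1 nl1 ol2 s l e2 hn, hw => by
      obtain ⟨h1, ⟨hs, he2, hle⟩, hl2, hv1⟩ := hw
      simp only [SEnv.len] at hl2
      simp only [SEnv.lev] at hv1
      refine ⟨⟨h1, he2, by omega, by simp [SEnv.lev] at *; omega⟩, ?_, ?_⟩
      · simp [SEnv.len]; omega
      · simp [SEnv.lev]; omega
  | _, _, .m6 t n e1 ol2 s l e2, hw => by
      obtain ⟨⟨ht, he1, hle1⟩, hc, hl2, -⟩ := hw
      simp only [SEnv.len] at hl2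
      refine ⟨⟨⟨ht, hc, by simp [SEnv.len]; omega, le_refl _⟩,
        ⟨he1, hc, by simp [SEnv.len]; omega, hle1⟩, by simp [SEnv.lev]⟩, ?_, ?_⟩
      · simp [SEnv.len]; omega
      · simp [SEnv.lev]
  | _, _, .consT t t' n e h, hw =>
      ⟨⟨stepT_wf h hw.1, hw.2.1, hw.2.2⟩, rfl, le_refl _⟩
  | _, _, .consE t n e e' h, hw => by
      obtain ⟨ht, hew, hle⟩ := hw
      obtain ⟨hw', hlen', hlev'⟩ := stepE_main h hew
      exact ⟨⟨ht, hw', le_trans hlev' hle⟩, by simp [SEnv.len, hlen'], le_refl _⟩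
  | _, _, .mergeL e1 e1' nl1 ol2 e2 h, hw => by
      obtain ⟨h1, h2, hl2, hv1⟩ := hw
      obtain ⟨hw', hlen', hlev'⟩ := stepE_main h h1
      exact ⟨⟨hw', h2, hl2, le_trans hlev' hv1⟩, by simp [SEnv.len, hlen'],
        by simp [SEnv.lev]⟩
  | _, _, .mergeR e1 nl1 ol2 e2 e2' h, hw => by
      obtain ⟨h1, h2, hl2, hv1⟩ := hw
      obtain ⟨hw', hlen', hlev'⟩ := stepE_main h h2
      exact ⟨⟨h1, hw', hlen'.trans hl2, hv1⟩, by simp [SEnv.len], by simp [SEnv.lev]; omega⟩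
end

/-- a single reading/merging step on a well-formed environment
preserves well-formedness, preserves length, and does not increase the level. -/
theorem stmt1 (e e' : SEnv) (hwf : e.wf) (h : StepE e e') :
    e'.wf ∧ e'.len = e.len ∧ e'.lev ≤ e.lev := stepE_main h hwf
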